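/- Derivative of the trace of a matrix exponential along a path: let γ ↦ A(γ) be a continuously differentiable map from an open interval I ⊆ ℝ into the Hermitian n×n complex matrices. Then γ ↦ tr(exp(A(γ))) is differentiable on I with d/dγ tr(exp(A(γ))) = tr(exp(A(γ))·A'(γ)). Consequently, for β > 0, a fixed Hermitian matrix H, and a continuously differentiable path γ ↦ K(γ) of Hermitian matrices defined on a neighborhood of [0,1], one has ∫₀¹ [tr(e^{−β(H+K(γ))}·K'(γ)) / tr(e^{−β(H+K(γ))})] dγ = −β^{−1}·(log tr(e^{−β(H+K(1))}) − log tr(e^{−β(H+K(0))})). -/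

import Mathlib

open Matrix Kronecker ComplexOrder

/-- Logarithm of a matrix, defined via the spectral theorem for Hermitian matrices
(junk value `0` on non-Hermitian matrices).  Since `Real.log 0 = 0`, for a positive
semidefinite matrix this is the logarithm taken on the support, with the convention
`log 0 = 0` on the kernel. -/
noncomputable def mlog {n : Type*} [Fintype n] [DecidableEq n] (A : Matrix n n ℂ) :
    Matrix n n ℂ :=
  if hA : A.IsHermitian then
    (hA.eigenvectorUnitary : Matrix n n ℂ) *
      Matrix.diagonal (fun i => (Real.log (hA.eigenvalues i) : ℂ)) *
      (star hA.eigenvectorUnitary : Matrix n n ℂ)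
  else 0

/-- von Neumann entropy `S(ρ) = -tr(ρ log ρ)`. -/
noncomputable def vnEnt {n : Type*} [Fintype n] [DecidableEq n] (ρ : Matrix n n ℂ) : ℝ :=
  -(Matrix.trace (ρ * mlog ρ)).re

/-- Relative entropy `S(ζ₁|ζ₂) = tr(ζ₁ (log ζ₁ - log ζ₂))`. -/
noncomputable def relEnt {n : Type*} [Fintype n] [DecidableEq n] (ζ₁ ζ₂ : Matrix n n ℂ) : ℝ :=
  (Matrix.trace (ζ₁ * (mlog ζ₁ - mlog ζ₂))).re

/-- A density matrix: positive semidefinite with unit trace. -/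
def IsDensityMatrix {n : Type*} [Fintype n] [DecidableEq n] (ρ : Matrix n n ℂ) : Prop :=
  ρ.PosSemidef ∧ ρ.trace = 1

/-- Partial trace over the reservoir (second) factor:
`(tr_R M)_{ij} = Σ_k M_{(i,k),(j,k)}`. -/
noncomputable def ptraceR {dS dR : ℕ} (M : Matrix (Fin dS × Fin dR) (Fin dS × Fin dR) ℂ) :
    Matrix (Fin dS) (Fin dS) ℂ :=
  Matrix.of fun i j => ∑ k, M (i, k) (j, k)

/-- Partial trace over the system (first) factor:
`(tr_S M)_{kl} = Σ_i M_{(i,k),(i,l)}`. -/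
noncomputable def ptraceS {dS dR : ℕ} (M : Matrix (Fin dS × Fin dR) (Fin dS × Fin dR) ℂ) :
    Matrix (Fin dR) (Fin dR) ℂ :=
  Matrix.of fun k l => ∑ i, M (i, k) (i, l)

/-- The Gibbs state `e^{-βH}/tr(e^{-βH})` at inverse temperature `β`. -/
noncomputable def gibbs {dR : ℕ} (β : ℝ) (H : Matrix (Fin dR) (Fin dR) ℂ) :
    Matrix (Fin dR) (Fin dR) ℂ :=
  (Matrix.trace (NormedSpace.exp ((-β : ℂ) • H)))⁻¹ • NormedSpace.exp ((-β : ℂ) • H)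

/-- The trace norm `‖X‖₁ = tr((X*X)^{1/2})`. -/
noncomputable def traceNorm {n : Type*} [Fintype n] [DecidableEq n] (X : Matrix n n ℂ) : ℝ :=
  (Matrix.trace ((Matrix.posSemidef_conjTranspose_mul_self X).1.eigenvectorUnitary.1 *
    Matrix.diagonal (fun i => ((√((Matrix.posSemidef_conjTranspose_mul_self X).1.eigenvalues i) : ℝ) : ℂ)) *
    (star (Matrix.posSemidef_conjTranspose_mul_self X).1.eigenvectorUnitary : Matrix n n ℂ))).re

/-!
Differentiating `τ (exp x) = ∑ τ (x ^ k) / k!` term by term, the derivative of `τ (x ^ (k + 1))`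
in direction `B` is a sum of `k + 1` terms `τ (x ^ (k - i) * B * x ^ i)`, which the trace
property collapses to `(k + 1) • τ (x ^ k * B)`; summing gives `τ (exp x * B)`. For the integral,
the integrand is `-β⁻¹` times the logarithmic derivative of `Z γ = tr e^{-β(H + K γ)}`, and `Z` is
positive because `e^B = (e^{B/2})ᴴ e^{B/2}` for Hermitian `B`.
-/

open NormedSpace (exp)
open scoped Nat

section TraceExp

variable {𝕂 𝔸 : Type*} [RCLike 𝕂] [NormedRing 𝔸] [NormedAlgebra 𝕂 𝔸] (τ : 𝔸 →L[𝕂] 𝕂)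

theorem norm_pow_mul_le (x y : 𝔸) (k : ℕ) : ‖x ^ k * y‖ ≤ ‖x‖ ^ k * ‖y‖ := by
  induction k with
  | zero => simp
  | succ k ih =>
    calc ‖x ^ (k + 1) * y‖ = ‖x * (x ^ k * y)‖ := by rw [pow_succ', mul_assoc]
      _ ≤ ‖x‖ * (‖x‖ ^ k * ‖y‖) := norm_mul_le_of_le le_rfl ih
      _ = ‖x‖ ^ (k + 1) * ‖y‖ := by ring

theorem norm_comp_mul_pow_le (y : 𝔸) (k : ℕ) :
    ‖τ.comp (ContinuousLinearMap.mul 𝕂 𝔸 (y ^ k))‖ ≤ ‖τ‖ * ‖y‖ ^ k :=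
  ContinuousLinearMap.opNorm_le_bound _ (by positivity) fun B =>
    (τ.le_opNorm _).trans <| by
      simpa [mul_assoc] using mul_le_mul_of_nonneg_left (norm_pow_mul_le y B k) (norm_nonneg τ)

theorem hasFDerivAt_trace_pow (hτ : ∀ a b, τ (a * b) = τ (b * a)) (x : 𝔸) (k : ℕ) :
    HasFDerivAt (fun y => τ (y ^ (k + 1)))
      (((k : 𝕂) + 1) • τ.comp (ContinuousLinearMap.mul 𝕂 𝔸 (x ^ k))) x := by
  refine (τ.hasFDerivAt.comp x (hasFDerivAt_pow' (k + 1))).congr_fderiv ?_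
  ext B
  have hcyc : ∀ i ∈ Finset.range (k + 1), τ (x ^ (k - i) * B * x ^ i) = τ (x ^ k * B) := by
    intro i hi
    rw [hτ, ← mul_assoc, ← pow_add, Nat.add_sub_cancel' (Finset.mem_range_succ_iff.mp hi)]
  simp [map_sum, Finset.sum_congr rfl hcyc]

variable [CompleteSpace 𝔸]

theorem hasSum_trace_exp (x : 𝔸) :
    HasSum (fun k => (k !⁻¹ : 𝕂) * τ (x ^ k)) (τ (exp x)) := by
  simpa using τ.hasSum (NormedSpace.exp_series_hasSum_exp' (𝕂 := 𝕂) x)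

theorem hasSum_comp_mul_exp (x : 𝔸) :
    HasSum (fun k => (k !⁻¹ : 𝕂) • τ.comp (ContinuousLinearMap.mul 𝕂 𝔸 (x ^ k)))
      (τ.comp (ContinuousLinearMap.mul 𝕂 𝔸 (exp x))) := by
  simpa using ((ContinuousLinearMap.compL 𝕂 𝔸 𝔸 𝕂 τ).comp (ContinuousLinearMap.mul 𝕂 𝔸)).hasSum
    (NormedSpace.exp_series_hasSum_exp' (𝕂 := 𝕂) x)

theorem hasFDerivAt_trace_exp (hτ : ∀ a b, τ (a * b) = τ (b * a)) (x : 𝔸) :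
    HasFDerivAt (fun y => τ (exp y)) (τ.comp (ContinuousLinearMap.mul 𝕂 𝔸 (exp x))) x := by
  set f : ℕ → 𝔸 → 𝕂 := fun k y => ((k + 1) !⁻¹ : 𝕂) * τ (y ^ (k + 1))
  set f' : ℕ → 𝔸 → 𝔸 →L[𝕂] 𝕂 := fun k y =>
    (k !⁻¹ : 𝕂) • τ.comp (ContinuousLinearMap.mul 𝕂 𝔸 (y ^ k))
  have hf : ∀ k y, y ∈ Metric.ball x 1 → HasFDerivAt (f k) (f' k y) y := by
    intro k y _
    refine ((hasFDerivAt_trace_pow τ hτ y k).const_mul _).congr_fderiv ?_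
    simp only [f', smul_smul, Nat.factorial_succ, Nat.cast_mul, Nat.cast_succ]
    congr 1
    field_simp
  have hf' : ∀ k y, y ∈ Metric.ball x 1 → ‖f' k y‖ ≤ ‖τ‖ * ((‖x‖ + 1) ^ k / k !) := by
    intro k y hy
    have hy' : ‖y‖ ≤ ‖x‖ + 1 := by
      have := norm_le_norm_add_norm_sub' y x
      rw [Metric.mem_ball, dist_eq_norm] at hy
      linarith
    calc ‖f' k y‖ = (k ! : ℝ)⁻¹ * ‖τ.comp (ContinuousLinearMap.mul 𝕂 𝔸 (y ^ k))‖ := by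
          simp [f', norm_smul]
      _ ≤ (k ! : ℝ)⁻¹ * (‖τ‖ * (‖x‖ + 1) ^ k) := by
          gcongr
          exact (norm_comp_mul_pow_le τ y k).trans (by gcongr)
      _ = ‖τ‖ * ((‖x‖ + 1) ^ k / k !) := by ring
  have hsum : ∀ y, HasSum (fun k => f k y) (τ (exp y) - τ 1) := fun y => by
    simpa [f] using (hasSum_nat_add_iff' 1).mpr (hasSum_trace_exp τ y)
  have hball : IsPreconnected (Metric.ball x 1) := by
    let := NormedSpace.restrictScalars ℝ 𝕂 𝔸
    exact (convex_ball x 1).isPreconnected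
  have key := hasFDerivAt_tsum_of_isPreconnected
    ((Real.summable_pow_div_factorial _).mul_left ‖τ‖) Metric.isOpen_ball hball hf hf'
    (Metric.mem_ball_self one_pos) (hsum x).summable (Metric.mem_ball_self one_pos)
  rw [(hasSum_comp_mul_exp τ x).tsum_eq] at key
  simpa [(hsum _).tsum_eq] using key.const_add (τ 1)

end TraceExp

theorem integral_div_eq_log_sub_log {Z Z' : ℝ → ℝ} {a b : ℝ}
    (hZ : ∀ x ∈ Set.uIcc a b, HasDerivAt Z (Z' x) x) (hpos : ∀ x ∈ Set.uIcc a b, 0 < Z x)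
    (hZ' : ContinuousOn Z' (Set.uIcc a b)) :
    ∫ x in a..b, Z' x / Z x = Real.log (Z b) - Real.log (Z a) := by
  have hZc : ContinuousOn Z (Set.uIcc a b) := fun x hx => (hZ x hx).continuousAt.continuousWithinAt
  exact intervalIntegral.integral_eq_sub_of_hasDerivAt
    (fun x hx => (hZ x hx).log (hpos x hx).ne')
    ((hZ'.div hZc fun x hx => (hpos x hx).ne').intervalIntegrable)

namespace Matrix

variable {n : Type*} [Fintype n] [DecidableEq n]

theorem hasDerivAt_trace_exp {A : ℝ → Matrix n n ℂ} {A' : Matrix n n ℂ} {γ : ℝ}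
    (hA : ∀ i j, HasDerivAt (fun s => A s i j) (A' i j) γ) :
    HasDerivAt (fun s => (exp (A s)).trace) ((exp (A γ) * A').trace) γ := by
  -- Any submultiplicative norm will do; derivatives only see the (product) topology.
  let := Matrix.linftyOpNormedRing (n := n) (α := ℂ)
  let := Matrix.linftyOpNormedAlgebra (n := n) (α := ℂ) (R := ℂ)
  have hpath : HasDerivAt A A' γ := hasDerivAt_pi.2 fun i => hasDerivAt_pi.2 (hA i)
  have htr := hasFDerivAt_trace_exp (𝕂 := ℂ) (traceLinearMap n ℂ ℂ).toContinuousLinearMap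
    trace_mul_comm (A γ)
  exact (htr.restrictScalars ℝ).comp_hasDerivAt γ hpath

theorem hasDerivAt_re_trace_exp {A : ℝ → Matrix n n ℂ} {A' : Matrix n n ℂ} {γ : ℝ}
    (hA : ∀ i j, HasDerivAt (fun s => A s i j) (A' i j) γ) :
    HasDerivAt (fun s => (exp (A s)).trace.re) ((exp (A γ) * A').trace.re) γ :=
  Complex.reCLM.hasFDerivAt.comp_hasDerivAt γ (hasDerivAt_trace_exp hA)

theorem IsHermitian.trace_exp_pos [Nonempty n] {B : Matrix n n ℂ} (hB : B.IsHermitian) :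
    0 < (NormedSpace.exp B).trace := by
  set X := NormedSpace.exp ((2⁻¹ : ℝ) • B)
  have hX : Xᴴ = X := (hB.smul (IsSelfAdjoint.all (2⁻¹ : ℝ))).exp
  have hsq : NormedSpace.exp B = Xᴴ * X := by
    rw [hX, ← exp_add_of_commute _ _ (Commute.refl _), ← add_smul]
    norm_num
  rw [hsq]
  exact (posSemidef_conjTranspose_mul_self X).trace_nonneg.lt_of_ne'
    (trace_conjTranspose_mul_self_eq_zero_iff.not.2 (isUnit_exp _).ne_zero)

theorem continuousOn_trace_exp_mul {P Q : ℝ → Matrix n n ℂ} {s : Set ℝ}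
    (hP : ContinuousOn P s) (hQ : ContinuousOn Q s) :
    ContinuousOn (fun γ => (exp (P γ) * Q γ).trace) s := by
  let := Matrix.linftyOpNormedRing (n := n) (α := ℂ)
  let := Matrix.linftyOpNormedAlgebra (n := n) (α := ℂ) (R := ℂ)
  let := NormedAlgebra.restrictScalars ℚ ℂ (Matrix n n ℂ)
  exact continuous_id.matrix_trace.comp_continuousOn
    ((NormedSpace.exp_continuous.comp_continuousOn hP).mul hQ)

theorem integral_re_trace_exp_mul_div [Nonempty n] {P P' : ℝ → Matrix n n ℂ} {a b : ℝ}
    (hP : ∀ γ ∈ Set.uIcc a b, (P γ).IsHermitian)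
    (hPderiv : ∀ γ ∈ Set.uIcc a b, ∀ i j, HasDerivAt (fun s => P s i j) (P' γ i j) γ)
    (hP' : ContinuousOn P' (Set.uIcc a b)) :
    ∫ γ in a..b, (exp (P γ) * P' γ).trace.re / (exp (P γ)).trace.re
      = Real.log (exp (P b)).trace.re - Real.log (exp (P a)).trace.re := by
  have hPc : ContinuousOn P (Set.uIcc a b) := fun γ hγ => (continuousAt_pi.2 fun i =>
    continuousAt_pi.2 fun j => (hPderiv γ hγ i j).continuousAt).continuousWithinAt
  exact integral_div_eq_log_sub_log (fun γ hγ => hasDerivAt_re_trace_exp (hPderiv γ hγ))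
    (fun γ hγ => (Complex.pos_iff.1 (hP γ hγ).trace_exp_pos).1)
    (Complex.continuous_re.comp_continuousOn (continuousOn_trace_exp_mul hPc hP'))

end Matrix

theorem trace_exp_deriv_and_integral_general {n : ℕ}
    {I : Set ℝ}
    (A A' : ℝ → Matrix (Fin n) (Fin n) ℂ)
    (hAderiv : ∀ γ ∈ I, ∀ i j, HasDerivAt (fun s => A s i j) (A' γ i j) γ)
    (β : ℝ) (hβ : 0 < β)
    (H : Matrix (Fin n) (Fin n) ℂ) (hH : H.IsHermitian)
    {J : Set ℝ} (hJ01 : Set.Icc (0 : ℝ) 1 ⊆ J)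
    (K K' : ℝ → Matrix (Fin n) (Fin n) ℂ)
    (hK : ∀ γ ∈ J, (K γ).IsHermitian)
    (hKderiv : ∀ γ ∈ J, ∀ i j, HasDerivAt (fun s => K s i j) (K' γ i j) γ)
    (hKcont : ContinuousOn K' J) :
    (∀ γ ∈ I, HasDerivAt (fun s => (Matrix.trace (NormedSpace.exp (A s))).re)
        ((Matrix.trace (NormedSpace.exp (A γ) * A' γ)).re) γ) ∧
    ∫ γ in (0 : ℝ)..1,
        (Matrix.trace (NormedSpace.exp ((-β : ℂ) • (H + K γ)) * K' γ)).re /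
          (Matrix.trace (NormedSpace.exp ((-β : ℂ) • (H + K γ)))).re
      = -β⁻¹ *
        (Real.log (Matrix.trace (NormedSpace.exp ((-β : ℂ) • (H + K 1)))).re
          - Real.log (Matrix.trace (NormedSpace.exp ((-β : ℂ) • (H + K 0)))).re) := by
  refine ⟨fun γ hγ => hasDerivAt_re_trace_exp (hAderiv γ hγ), ?_⟩
  cases isEmpty_or_nonempty (Fin n)
  · simp [trace_eq_zero_of_isEmpty]
  have hJ : Set.uIcc (0 : ℝ) 1 ⊆ J := by rwa [Set.uIcc_of_le zero_le_one]
  have hβ' : IsSelfAdjoint (-β : ℂ) := by simp [IsSelfAdjoint]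
  have hlog := integral_re_trace_exp_mul_div (P := fun γ => (-β : ℂ) • (H + K γ))
    (P' := fun γ => (-β : ℂ) • K' γ) (fun γ hγ => (hH.add (hK γ (hJ hγ))).smul hβ')
    (fun γ hγ i j => ((hKderiv γ (hJ hγ) i j).const_add (H i j)).const_mul (-β : ℂ))
    ((hKcont.mono hJ).const_smul (-β : ℂ))
  rw [← hlog, ← intervalIntegral.integral_const_mul]
  congr 1 with γ
  simp only [Matrix.mul_smul, trace_smul, smul_eq_mul, Complex.mul_re, Complex.neg_re,
    Complex.ofReal_re, Complex.neg_im, Complex.ofReal_im, neg_zero, zero_mul, sub_zero]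
  field_simp

/-- **Derivative of the trace of a matrix exponential along a path.**
If `γ ↦ A(γ)` is a continuously differentiable path of Hermitian matrices on an
open set `I` then `γ ↦ tr(exp(A(γ)))` is differentiable with derivative
`tr(exp(A(γ)) A'(γ))`.  Consequently, for `β > 0`, a fixed Hermitian `H`, and a
continuously differentiable path `γ ↦ K(γ)` of Hermitian matrices on an open
neighborhood `J` of `[0,1]`, one has
`∫₀¹ tr(e^{-β(H+K(γ))} K'(γ))/tr(e^{-β(H+K(γ))}) dγ
  = -β⁻¹ (log tr(e^{-β(H+K(1))}) - log tr(e^{-β(H+K(0))}))`. -/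
theorem trace_exp_deriv_and_integral {n : ℕ}
    {I : Set ℝ} (hI : IsOpen I)
    (A A' : ℝ → Matrix (Fin n) (Fin n) ℂ)
    (hA : ∀ γ ∈ I, (A γ).IsHermitian)
    (hAderiv : ∀ γ ∈ I, ∀ i j, HasDerivAt (fun s => A s i j) (A' γ i j) γ)
    (hAcont : ContinuousOn A' I)
    (β : ℝ) (hβ : 0 < β)
    (H : Matrix (Fin n) (Fin n) ℂ) (hH : H.IsHermitian)
    {J : Set ℝ} (hJ : IsOpen J) (hJ01 : Set.Icc (0 : ℝ) 1 ⊆ J)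
    (K K' : ℝ → Matrix (Fin n) (Fin n) ℂ)
    (hK : ∀ γ ∈ J, (K γ).IsHermitian)
    (hKderiv : ∀ γ ∈ J, ∀ i j, HasDerivAt (fun s => K s i j) (K' γ i j) γ)
    (hKcont : ContinuousOn K' J) :
    (∀ γ ∈ I, HasDerivAt (fun s => (Matrix.trace (NormedSpace.exp (A s))).re)
        ((Matrix.trace (NormedSpace.exp (A γ) * A' γ)).re) γ) ∧
    ∫ γ in (0 : ℝ)..1,
        (Matrix.trace (NormedSpace.exp ((-β : ℂ) • (H + K γ)) * K' γ)).re /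
          (Matrix.trace (NormedSpace.exp ((-β : ℂ) • (H + K γ)))).re
      = -β⁻¹ *
        (Real.log (Matrix.trace (NormedSpace.exp ((-β : ℂ) • (H + K 1)))).re
          - Real.log (Matrix.trace (NormedSpace.exp ((-β : ℂ) • (H + K 0)))).re) :=
  trace_exp_deriv_and_integral_general A A' hAderiv β hβ H hH hJ01 K K' hK hKderiv hKcont
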